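/- In an n×n alternating sign matrix that classically avoids 3412, the number of −1 entries is at most n. -/
import Mathlib

def IsASM {n : ℕ} (A : Matrix (Fin n) (Fin n) ℤ) : Prop :=
  (∀ i j, A i j = -1 ∨ A i j = 0 ∨ A i j = 1) ∧
  (∀ i, ∑ j, A i j = 1) ∧
  (∀ j, ∑ i, A i j = 1) ∧
  (∀ i j, ∑ l ∈ Finset.Iic j, A i l = 0 ∨ ∑ l ∈ Finset.Iic j, A i l = 1) ∧
  (∀ i j, ∑ l ∈ Finset.Iic i, A l j = 0 ∨ ∑ l ∈ Finset.Iic i, A l j = 1)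

def ASMContains {n m : ℕ} (A : Matrix (Fin n) (Fin n) ℤ) (σ : Equiv.Perm (Fin m)) : Prop :=
  ∃ f g : Fin m ↪o Fin n, ∀ a, A (f a) (g (σ a)) = 1

def ASMAvoids {n m : ℕ} (A : Matrix (Fin n) (Fin n) ℤ) (σ : Equiv.Perm (Fin m)) : Prop :=
  ¬ ASMContains A σ

def p3412 : Equiv.Perm (Fin 4) := ⟨![2,3,0,1], ![2,3,0,1], by decide, by decide⟩

namespace ASMAux

variable {n : ℕ}

/-- prefix sums over `Iio` are also 0 or 1 -/
lemma prefix_Iio (g : Fin n → ℤ)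
    (hp : ∀ j, ∑ l ∈ Finset.Iic j, g l = 0 ∨ ∑ l ∈ Finset.Iic j, g l = 1)
    (j : Fin n) : ∑ l ∈ Finset.Iio j, g l = 0 ∨ ∑ l ∈ Finset.Iio j, g l = 1 := by
  rcases Nat.eq_zero_or_pos j.val with h0 | hpos
  · left
    have : Finset.Iio j = ∅ := by
      ext l; simp [Finset.mem_Iio, Fin.lt_def, h0]
    rw [this, Finset.sum_empty]
  · have hj : (j : ℕ) - 1 < n := lt_of_le_of_lt (Nat.sub_le _ _) j.isLt
    have : Finset.Iio j = Finset.Iic ⟨(j : ℕ) - 1, hj⟩ := by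
      ext l; simp only [Finset.mem_Iio, Finset.mem_Iic, Fin.lt_def, Fin.le_def]; omega
    rw [this]; exact hp _

lemma Iic_split (g : Fin n → ℤ) (j : Fin n) :
    ∑ l ∈ Finset.Iic j, g l = g j + ∑ l ∈ Finset.Iio j, g l := by
  rw [← Finset.Iio_insert, Finset.sum_insert (by simp)]

lemma exists_one_of_pos (g : Fin n → ℤ) (hv : ∀ j, g j = -1 ∨ g j = 0 ∨ g j = 1)
    {s : Finset (Fin n)} (h : 0 < ∑ l ∈ s, g l) : ∃ l ∈ s, g l = 1 := by
  by_contra hc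
  push_neg at hc
  have : ∑ l ∈ s, g l ≤ 0 := Finset.sum_nonpos (fun l hl => by
    rcases hv l with h1 | h1 | h1 <;> simp [h1] <;> exact absurd h1 (hc l hl))
  omega

section OneLine

variable (g : Fin n → ℤ) (hv : ∀ j, g j = -1 ∨ g j = 0 ∨ g j = 1)
  (hs : ∑ j, g j = 1)
  (hp : ∀ j, ∑ l ∈ Finset.Iic j, g l = 0 ∨ ∑ l ∈ Finset.Iic j, g l = 1)

include hp

lemma neg_prefix {j : Fin n} (h : g j = -1) :
    ∑ l ∈ Finset.Iic j, g l = 0 ∧ ∑ l ∈ Finset.Iio j, g l = 1 := by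
  have h1 := hp j
  have h2 := prefix_Iio g hp j
  have h3 := Iic_split g j
  rw [h] at h3
  omega

include hv

lemma left_one {j : Fin n} (h : g j = -1) : ∃ l, l < j ∧ g l = 1 := by
  have h1 := (neg_prefix g hp h).2
  obtain ⟨l, hl, hgl⟩ := exists_one_of_pos g hv (s := Finset.Iio j) (by omega)
  exact ⟨l, Finset.mem_Iio.mp hl, hgl⟩

include hs

lemma right_one {j : Fin n} (h : g j = -1) : ∃ r, j < r ∧ g r = 1 := by
  have h1 := (neg_prefix g hp h).1
  have hsub : Finset.Iic j ⊆ Finset.univ := Finset.subset_univ _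
  have hd : ∑ l ∈ Finset.univ \ Finset.Iic j, g l = 1 - 0 := by
    rw [Finset.sum_sdiff_eq_sub hsub, hs, h1]
  obtain ⟨r, hr, hgr⟩ := exists_one_of_pos g hv
    (s := Finset.univ \ Finset.Iic j) (by omega)
  refine ⟨r, ?_, hgr⟩
  simp only [Finset.mem_sdiff, Finset.mem_Iic] at hr
  exact lt_of_not_ge hr.2

omit hs

lemma line_gap {j j' : Fin n} (h : g j = -1) (h' : g j' = -1) (hlt : j < j') :
    (j : ℕ) + 2 ≤ (j' : ℕ) := by
  have h1 := (neg_prefix g hp h).1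
  have h2 := (neg_prefix g hp h').2
  have hsub : Finset.Iic j ⊆ Finset.Iio j' :=
    fun l hl => Finset.mem_Iio.mpr (lt_of_le_of_lt (Finset.mem_Iic.mp hl) hlt)
  have hd : ∑ l ∈ Finset.Iio j' \ Finset.Iic j, g l = 1 - 0 := by
    rw [Finset.sum_sdiff_eq_sub hsub, h1, h2]
  obtain ⟨k, hk, hgk⟩ := exists_one_of_pos g hv
    (s := Finset.Iio j' \ Finset.Iic j) (by omega)
  simp only [Finset.mem_sdiff, Finset.mem_Iio, Finset.mem_Iic, not_le] at hk
  have := hk.1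
  have := hk.2
  simp only [Fin.lt_def] at *
  omega

end OneLine

/-- Build an order embedding `Fin 4 ↪o Fin n` from four increasing values. -/
def emb4 {a b c d : Fin n} (h1 : a < b) (h2 : b < c) (h3 : c < d) : Fin 4 ↪o Fin n :=
  OrderEmbedding.ofStrictMono ![a, b, c, d] (by
    rw [Fin.strictMono_iff_lt_succ]
    intro i
    fin_cases i
    · simpa using h1
    · simpa using h2
    · simpa using h3)

end ASMAux

lemma ASMAux.chain {n : ℕ} (A : Matrix (Fin n) (Fin n) ℤ) (hA : IsASM A)
    (h3412 : ASMAvoids A p3412) {i j i' j' : Fin n}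
    (h : A i j = -1) (h' : A i' j' = -1) (hi : i < i') : ¬ j' < j := by
  intro hj
  obtain ⟨hv, hrs, hcs, hrp, hcp⟩ := hA
  obtain ⟨a, ha, ha1⟩ := ASMAux.left_one (fun l => A l j) (fun l => hv l j)
    (fun k => hcp k j) h
  obtain ⟨r, hr, hr1⟩ := ASMAux.right_one (A i) (hv i) (hrs i)
    (fun k => hrp i k) h
  obtain ⟨l, hl, hl1⟩ := ASMAux.left_one (A i') (hv i') (fun k => hrp i' k) h'
  obtain ⟨b, hb, hb1⟩ := ASMAux.right_one (fun l => A l j') (fun l => hv l j')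
    (hcs j') (fun k => hcp k j') h'
  refine h3412 ⟨ASMAux.emb4 ha hi hb, ASMAux.emb4 hl hj hr, ?_⟩
  intro x
  fin_cases x <;>
    simp [p3412, ASMAux.emb4, OrderEmbedding.ofStrictMono, Equiv.coe_fn_mk] <;>
    assumption

theorem statement10 {n : ℕ} (A : Matrix (Fin n) (Fin n) ℤ) (hA : IsASM A)
    (h3412 : ASMAvoids A p3412) :
    (Finset.univ.filter (fun p : Fin n × Fin n => A p.1 p.2 = -1)).card ≤ n := by
  classical
  have hv := hA.1
  have key : ∀ p q : Fin n × Fin n, A p.1 p.2 = -1 → A q.1 q.2 = -1 →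
      p.1 ≤ q.1 → p.2 ≤ q.2 → p ≠ q →
      (p.1 : ℕ) + (p.2 : ℕ) + 2 ≤ (q.1 : ℕ) + (q.2 : ℕ) := by
    intro p q hp hq h1 h2 hne
    rcases eq_or_lt_of_le h1 with he1 | hlt1
    · have h2' : p.2 < q.2 := by
        rcases eq_or_lt_of_le h2 with he2 | hlt2
        · exact absurd (Prod.ext_iff.mpr ⟨he1, he2⟩) hne
        · exact hlt2
      have hq' : A p.1 q.2 = -1 := by rw [he1]; exact hq
      have := ASMAux.line_gap (A p.1) (hv p.1) (fun k => hA.2.2.2.1 p.1 k) hp hq' h2'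
      have he1' : (p.1 : ℕ) = q.1 := congrArg Fin.val he1
      omega
    · rcases eq_or_lt_of_le h2 with he2 | hlt2
      · have hq' : A q.1 p.2 = -1 := by rw [he2]; exact hq
        have := ASMAux.line_gap (fun l => A l p.2) (fun l => hv l p.2)
          (fun k => hA.2.2.2.2 k p.2) hp hq' hlt1
        have he2' : (p.2 : ℕ) = q.2 := congrArg Fin.val he2
        omega
      · have := Fin.lt_def.mp hlt1
        have := Fin.lt_def.mp hlt2
        omega
  have hmaps : ∀ p ∈ Finset.univ.filter (fun p : Fin n × Fin n => A p.1 p.2 = -1),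
      ((p.1 : ℕ) + (p.2 : ℕ)) / 2 ∈ Finset.range n := by
    intro p _
    have := p.1.isLt
    have := p.2.isLt
    simp only [Finset.mem_range]
    omega
  have hinj : Set.InjOn (fun p : Fin n × Fin n => ((p.1 : ℕ) + (p.2 : ℕ)) / 2)
      (Finset.univ.filter (fun p : Fin n × Fin n => A p.1 p.2 = -1)) := by
    intro p hp q hq heq
    simp only [Finset.coe_filter, Set.mem_setOf_eq] at hp hq
    by_contra hne
    simp only at heq
    rcases lt_trichotomy p.1 q.1 with h1 | h1 | h1
    · have h2 : p.2 ≤ q.2 := le_of_not_gt (ASMAux.chain A hA h3412 hp.2 hq.2 h1)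
      have := key p q hp.2 hq.2 (le_of_lt h1) h2 hne
      omega
    · rcases lt_trichotomy p.2 q.2 with h2 | h2 | h2
      · have := key p q hp.2 hq.2 (le_of_eq h1) (le_of_lt h2) hne
        omega
      · exact hne (Prod.ext_iff.mpr ⟨h1, h2⟩)
      · have := key q p hq.2 hp.2 (le_of_eq h1.symm) (le_of_lt h2)
          (fun hh => hne hh.symm)
        omega
    · have h2 : q.2 ≤ p.2 := le_of_not_gt (ASMAux.chain A hA h3412 hq.2 hp.2 h1)
      have := key q p hq.2 hp.2 (le_of_lt h1) h2 (fun hh => hne hh.symm)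
      omega
  have := Finset.card_le_card_of_injOn _ hmaps hinj
  simpa using this
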